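/- Set R̂(ξ) := 2·T·R(2ξ)·T⁻¹ and 𝒰(ξ) := [[v − 2ξ, −q],[q⁻¹, 0]]. Then Λ(R̂(ξ))·𝒰(ξ) = 𝒰(ξ)·R̂(ξ), an identity of 2×2 matrices over the Laurent ring B[[ξ⁻¹]][ξ]. -/

import Mathlib

set_option synthInstance.maxHeartbeats 1000000
set_option maxHeartbeats 1000000

noncomputable section

open scoped BigOperators

/-- Apply a zero-preserving map to all coefficients of a Laurent series. -/
def coeffMap {R S : Type*} [Zero R] [Zero S] (f : ZeroHom R S)
    (x : HahnSeries ℤ R) : HahnSeries ℤ S where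
  coeff n := f (x.coeff n)
  isPWO_support' := x.isPWO_support'.mono (by
    intro n hn
    simp only [Function.mem_support, ne_eq] at hn ⊢
    exact fun h => hn (by rw [h, map_zero]))

end
noncomputable section

variable {B : Type*} [CommRing B] [Algebra ℂ B]

/-- λ (resp. ξ), as a Laurent series in its inverse: the Hahn-series exponent `n`
records the power of λ⁻¹. -/
def lamB (B : Type*) [CommRing B] : LaurentSeries B := HahnSeries.single (-1 : ℤ) 1

/-- Constants of B, as Laurent series. -/
def CB (x : B) : LaurentSeries B := HahnSeries.C x

/-- A derivation of B applied coefficientwise to a Laurent series. -/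
def dmapB (d : Derivation ℂ B B) : LaurentSeries B → LaurentSeries B :=
  coeffMap ⟨fun x => d x, map_zero d⟩

/-- A ring automorphism of B applied coefficientwise to a Laurent series. -/
def amapB (f : B ≃+* B) : LaurentSeries B → LaurentSeries B :=
  coeffMap ⟨fun x => f x, map_zero f⟩

/-- Polynomial part in λ: keep the exponents n ≤ 0 of λ⁻¹. -/
def polyPartB (x : LaurentSeries B) : LaurentSeries B where
  coeff n := if n ≤ 0 then x.coeff n else 0
  isPWO_support' := x.isPWO_support'.mono (by
    intro n hn
    simp only [Function.mem_support, ne_eq] at hn ⊢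
    intro h
    apply hn
    rw [h]
    simp)

/-- The substitution λ = 2ξ: the coefficient of ξ⁻ⁿ in R(2ξ) is 2⁻ⁿ times the
coefficient of λ⁻ⁿ in R(λ). -/
def scaleHalfB (x : LaurentSeries B) : LaurentSeries B where
  coeff n := ((2 : ℂ) ^ (-n) : ℂ) • x.coeff n
  isPWO_support' := x.isPWO_support'.mono (by
    intro n hn
    simp only [Function.mem_support, ne_eq] at hn ⊢
    exact fun h => hn (by rw [h, smul_zero]))

/-- U^{Toda}(λ) = [[v − λ, w],[−1, 0]]. -/
def UToda (v w : B) : Matrix (Fin 2) (Fin 2) (LaurentSeries B) :=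
  !![CB v - lamB B, CB w; -1, 0]

/-- V₀(λ) = [[λ, −w],[1, Λ⁻¹(v)]]. -/
def VToda0 (v w : B) (lamAut : B ≃+* B) : Matrix (Fin 2) (Fin 2) (LaurentSeries B) :=
  !![lamB B, -(CB w); 1, CB (lamAut.symm v)]

/-- The hypotheses on the Toda basic matrix resolvent R(λ). -/
def IsTodaMR (eb v w : B) (lamAut : B ≃+* B) (del : Derivation ℂ B B)
    (R : Matrix (Fin 2) (Fin 2) (LaurentSeries B)) : Prop :=
  (∀ i j : Fin 2, ∀ n : ℤ, n < 0 → (R i j).coeff n = 0) ∧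
  (∀ i j : Fin 2, ∀ n : ℤ, n ≤ 0 →
    ((R - !![(1 : LaurentSeries B), 0; 0, 0]) i j).coeff n = 0) ∧
  (R.map (amapB lamAut) * UToda v w = UToda v w * R) ∧
  R.trace = 1 ∧
  R.det = 0 ∧
  (CB eb • R.map (dmapB del) = VToda0 v w lamAut * R - R * VToda0 v w lamAut)

/-- R̂(ξ) = 2·T·R(2ξ)·T⁻¹. -/
def Rhat (r r' : B) (R : Matrix (Fin 2) (Fin 2) (LaurentSeries B)) :
    Matrix (Fin 2) (Fin 2) (LaurentSeries B) :=
  (2 : LaurentSeries B) •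
    (!![(-1 : LaurentSeries B), 0; 0, CB r] * R.map scaleHalfB *
      !![(-1 : LaurentSeries B), 0; 0, CB r'])

end

/-! The substitution λ = 2ξ is a ring homomorphism of `LaurentSeries B` that commutes with Λ,
so it carries the Toda relation Λ(R)·U^{Toda} = U^{Toda}·R to the same relation for R(2ξ) and
U^{Toda}(2ξ). Conjugating by T (i.e. R ↦ T·R·T⁻¹, U ↦ Λ(T)·U·T⁻¹) preserves relations of this
shape, and Λ(T)·U^{Toda}(2ξ)·T⁻¹ is exactly 𝒰(ξ) because Λ(r) = q⁻¹ and w·r⁻¹ = q. -/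

def IsDifferenceLaxPair {A : Type*} [Semiring A] {n : Type*} [Fintype n] (φ : A →+* A)
    (S U : Matrix n n A) : Prop :=
  S.map φ * U = U * S

namespace IsDifferenceLaxPair

variable {A : Type*} {n : Type*} [Fintype n]

theorem map_of_comm {A' : Type*} [Semiring A] [Semiring A'] {φ : A →+* A} {φ' : A' →+* A'}
    (ψ : A →+* A') (hcomm : ∀ x, φ' (ψ x) = ψ (φ x)) {S U : Matrix n n A}
    (h : IsDifferenceLaxPair φ S U) : IsDifferenceLaxPair φ' (S.map ψ) (U.map ψ) := by
  have hmap : (S.map ψ).map φ' = (S.map φ).map ψ := by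
    simp only [Matrix.map_map, Function.comp_def, hcomm]
  rw [IsDifferenceLaxPair, hmap, ← Matrix.map_mul, ← Matrix.map_mul, h]

theorem conj [DecidableEq n] [Semiring A] {φ : A →+* A} {S U : Matrix n n A}
    (T T' : Matrix n n A) (hT : T' * T = 1) (h : IsDifferenceLaxPair φ S U) :
    IsDifferenceLaxPair φ (T * S * T') (T.map φ * U * T') := by
  have hTφ : T'.map φ * T.map φ = 1 := by
    rw [← Matrix.map_mul, hT, Matrix.map_one φ φ.map_zero φ.map_one]
  unfold IsDifferenceLaxPair at h ⊢
  calc (T * S * T').map φ * (T.map φ * U * T')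
      = T.map φ * S.map φ * (T'.map φ * T.map φ) * U * T' := by
        simp only [Matrix.map_mul, Matrix.mul_assoc]
    _ = T.map φ * U * T' * (T * S * T') := by
        rw [hTφ, Matrix.mul_one, Matrix.mul_assoc _ (S.map φ), h]
        simp only [Matrix.mul_assoc, ← Matrix.mul_assoc T' T, hT, Matrix.one_mul]

theorem smul [CommSemiring A] {φ : A →+* A} {S U : Matrix n n A} (c : A) (hc : φ c = c)
    (h : IsDifferenceLaxPair φ S U) : IsDifferenceLaxPair φ (c • S) U := by
  rw [IsDifferenceLaxPair, Matrix.map_smul' φ c S (map_mul φ), hc, Matrix.smul_mul,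
    Matrix.mul_smul, h]

end IsDifferenceLaxPair

section Substitution

variable {B : Type*} [CommRing B] [Algebra ℂ B]

theorem coeff_scaleHalfB (x : LaurentSeries B) (n : ℤ) :
    (scaleHalfB x).coeff n = ((2 : ℂ) ^ (-n) : ℂ) • x.coeff n := rfl

theorem support_scaleHalfB (x : LaurentSeries B) : (scaleHalfB x).support = x.support := by
  ext n
  simp only [HahnSeries.mem_support, coeff_scaleHalfB, ne_eq,
    smul_eq_zero_iff_right (zpow_ne_zero (-n) (two_ne_zero (α := ℂ)))]

theorem scaleHalfB_mul (x y : LaurentSeries B) :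
    scaleHalfB (x * y) = scaleHalfB x * scaleHalfB y := by
  ext n
  have hdiag : Finset.antidiagonal (scaleHalfB x).isPWO_support (scaleHalfB y).isPWO_support n
      = Finset.antidiagonal x.isPWO_support y.isPWO_support n := by
    ext ij
    simp only [Finset.mem_antidiagonal, support_scaleHalfB]
  rw [coeff_scaleHalfB, HahnSeries.coeff_mul, HahnSeries.coeff_mul, hdiag, Finset.smul_sum]
  refine Finset.sum_congr rfl fun ij hij => ?_
  obtain ⟨-, -, hsum⟩ := Finset.mem_antidiagonal.mp hij
  rw [coeff_scaleHalfB, coeff_scaleHalfB, smul_mul_smul_comm,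
    ← zpow_add₀ (two_ne_zero (α := ℂ)), ← neg_add, hsum]

noncomputable def scaleHalfRingHom : LaurentSeries B →+* LaurentSeries B where
  toFun := scaleHalfB
  map_one' := by
    ext n
    by_cases h : n = 0 <;> simp [coeff_scaleHalfB, HahnSeries.coeff_one, h]
  map_mul' := scaleHalfB_mul
  map_zero' := by ext n; simp [coeff_scaleHalfB]
  map_add' x y := by ext n; simp [coeff_scaleHalfB, smul_add]

theorem scaleHalfRingHom_CB (b : B) : scaleHalfRingHom (CB b) = CB b := by
  ext n
  by_cases h : n = 0 <;> simp [scaleHalfRingHom, coeff_scaleHalfB, CB, h]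

theorem scaleHalfRingHom_lamB : scaleHalfRingHom (lamB B) = 2 * lamB B := by
  rw [two_mul]
  ext n
  by_cases h : n = -1
  · subst h
    simp [scaleHalfRingHom, coeff_scaleHalfB, lamB, ← two_smul ℂ]
  · simp [scaleHalfRingHom, coeff_scaleHalfB, lamB, h]

end Substitution

section Automorphism

variable {B : Type*} [CommRing B]

@[simp]
theorem coeff_amapB (f : B ≃+* B) (x : LaurentSeries B) (n : ℤ) :
    (amapB f x).coeff n = f (x.coeff n) := rfl

noncomputable def amapRingHom (f : B ≃+* B) : LaurentSeries B →+* LaurentSeries B where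
  toFun := amapB f
  map_one' := by
    ext n
    by_cases h : n = 0 <;> simp [HahnSeries.coeff_one, h]
  map_mul' x y := HahnSeries.map_mul (f : B →+* B).toNonUnitalRingHom
  map_zero' := by ext n; simp
  map_add' x y := by ext n; simp

theorem amapRingHom_CB (f : B ≃+* B) (b : B) : amapRingHom f (CB b) = CB (f b) := by
  ext n
  change (amapB f (CB b)).coeff n = (CB (f b)).coeff n
  by_cases h : n = 0 <;> simp [CB, h]

theorem amapRingHom_scaleHalfRingHom [Algebra ℂ B] (f : B ≃+* B) (x : LaurentSeries B) :
    amapRingHom f (scaleHalfRingHom x) = scaleHalfRingHom (amapRingHom f x) := by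
  ext n
  change (amapB f (scaleHalfB x)).coeff n = (scaleHalfB (amapB f x)).coeff n
  have hrat : (2 : ℂ) ^ (-n) = (((2 : ℚ) ^ (-n) : ℚ) : ℂ) := by push_cast; rfl
  simp only [coeff_amapB, coeff_scaleHalfB, hrat, map_ratCast_smul f ℂ ℂ]

end Automorphism

section Gauge

variable {B : Type*} [CommRing B]

theorem CB_mul (a b : B) : CB a * CB b = CB (a * b) := (map_mul HahnSeries.C a b).symm

theorem UToda_map_scaleHalfRingHom [Algebra ℂ B] (v w : B) :
    (UToda v w).map scaleHalfRingHom = !![CB v - 2 * lamB B, CB w; -1, 0] := by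
  refine Matrix.ext fun i j => ?_
  fin_cases i <;> fin_cases j <;> simp [UToda, scaleHalfRingHom_CB, scaleHalfRingHom_lamB]

theorem diag_neg_one_CB_mul_eq_one {r r' : B} (hr' : r * r' = 1) :
    !![(-1 : LaurentSeries B), 0; 0, CB r'] * !![(-1 : LaurentSeries B), 0; 0, CB r] = 1 := by
  rw [Matrix.mul_fin_two, CB_mul, mul_comm r', hr', Matrix.one_fin_two]
  simp [CB]

theorem nls_matrix_eq_gauge_UToda {lam : B ≃+* B} {q r v w q' r' : B} (hq' : q * q' = 1)
    (hr' : r * r' = 1) (hqr : q * r = w) (hqr1 : lam.symm q * r = 1) :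
    !![CB v - 2 * lamB B, -(CB q); CB q', 0] =
      (!![(-1 : LaurentSeries B), 0; 0, CB r]).map (amapB lam) *
        !![CB v - 2 * lamB B, CB w; -1, 0] * !![(-1 : LaurentSeries B), 0; 0, CB r'] := by
  have hlam_r : lam r = q' := by
    have hq : q * lam r = 1 := by simpa using congrArg lam hqr1
    calc lam r = lam r * (q * q') := by rw [hq', mul_one]
      _ = q' := by rw [← mul_assoc, mul_comm _ q, hq, one_mul]
  have hw_r' : w * r' = q := by rw [← hqr, mul_assoc, hr', mul_one]
  have hT : (!![(-1 : LaurentSeries B), 0; 0, CB r]).map (amapRingHom lam) =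
      !![(-1 : LaurentSeries B), 0; 0, CB q'] := by
    refine Matrix.ext fun i j => ?_
    fin_cases i <;> fin_cases j <;> simp [amapRingHom_CB, hlam_r]
  rw [show amapB lam = amapRingHom lam from rfl, hT, Matrix.mul_fin_two, Matrix.mul_fin_two]
  simp [CB_mul, hw_r']

end Gauge

theorem toda_nls_difference_Lax_general
    {B : Type*} [CommRing B] [Algebra ℂ B]
    (eb : B)
    (del : Derivation ℂ B B)
    (lam : B ≃+* B)
    (q r v w : B) (q' r' : B) (hq' : q * q' = 1) (hr' : r * r' = 1)
    (hqr : q * r = w) (hqr1 : lam.symm q * r = 1)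
    (R : Matrix (Fin 2) (Fin 2) (LaurentSeries B))
    (hR : IsTodaMR eb v w lam del R) :
    (Rhat r r' R).map (amapB lam) *
        !![CB v - 2 * lamB B, -(CB q); CB q', 0] =
      !![CB v - 2 * lamB B, -(CB q); CB q', 0] * Rhat r r' R := by
  obtain ⟨-, -, hToda, -, -, -⟩ := hR
  have hscaled : IsDifferenceLaxPair (amapRingHom lam) (R.map scaleHalfRingHom)
      (!![CB v - 2 * lamB B, CB w; -1, 0]) := by
    rw [← UToda_map_scaleHalfRingHom]
    exact IsDifferenceLaxPair.map_of_comm scaleHalfRingHom (amapRingHom_scaleHalfRingHom lam) hToda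
  have hgauged := (hscaled.conj _ _ (diag_neg_one_CB_mul_eq_one hr')).smul 2 (map_ofNat _ 2)
  rw [nls_matrix_eq_gauge_UToda hq' hr' hqr hqr1]
  exact hgauged

/-- Λ(R̂(ξ))·𝒰(ξ) = 𝒰(ξ)·R̂(ξ), where R̂(ξ) = 2·T·R(2ξ)·T⁻¹ and
𝒰(ξ) = [[v − 2ξ, −q],[q⁻¹, 0]]. -/
theorem toda_nls_difference_Lax
    {B : Type*} [CommRing B] [Algebra ℂ B]
    (eb ebi : B) (hebi : eb * ebi = 1)
    (del : Derivation ℂ B B) (hdeps : del eb = 0)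
    (lam : B ≃+* B) (hlamdel : ∀ x, lam (del x) = del (lam x)) (hlameps : lam eb = eb)
    (q r v w : B) (q' r' : B) (hq' : q * q' = 1) (hr' : r * r' = 1)
    (hqr : q * r = w) (hqr1 : lam.symm q * r = 1)
    (hdq : eb * del q = q * v) (hdr : eb * del r = -(r * lam.symm v))
    (R : Matrix (Fin 2) (Fin 2) (LaurentSeries B))
    (hR : IsTodaMR eb v w lam del R) :
    (Rhat r r' R).map (amapB lam) *
        !![CB v - 2 * lamB B, -(CB q); CB q', 0] =
      !![CB v - 2 * lamB B, -(CB q); CB q', 0] * Rhat r r' R :=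
  toda_nls_difference_Lax_general eb del lam q r v w q' r' hq' hr' hqr hqr1 R hR
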